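/- arXiv:2105.06093 — 2 statements merged into one kernel-verified Lean document; each statement's English description precedes it below -/
import Mathlib

section
/- Let 0 < ρ < 1 and |ζ| < 1. Then Σ_{l≥0} (−1)^{l+1} / (1 − ρ^{2l}ζ) = −Σ_{k≥0} ζᵏ/(1+ρ^{2k}), with both series converging (the left side conditionally via pairing, the right side absolutely). -/
/-!
With the Abel factor `x ^ l`, `0 ≤ x < 1`, expand `1 / (1 - q ^ l ζ)` geometrically: the double
series `-(-x) ^ l (q ^ l ζ) ^ k = -ζ ^ k (-x q ^ k) ^ l` is dominated by `|x| ^ l |ζ| ^ k`, so it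
may be summed in either order, and summing over `l` first gives `-Σ ζ ^ k / (1 + x q ^ k)`
(here `q = ρ²`). As `x → 1⁻` the terms of this series are dominated by `|ζ| ^ k`, and dominated
convergence gives the limit.
-/

open Filter Topology Complex

lemma norm_div_one_add_ofReal_le (z : ℂ) {t : ℝ} (ht : 0 ≤ t) : ‖z / (1 + (t : ℂ))‖ ≤ ‖z‖ := by
  rw [norm_div, ← ofReal_one, ← ofReal_add, norm_real, Real.norm_of_nonneg (by positivity)]
  exact div_le_self (norm_nonneg z) (by linarith)

lemma summable_pow_div_one_add_ofReal {ζ : ℂ} (hζ : ‖ζ‖ < 1) {t : ℕ → ℝ} (ht : ∀ k, 0 ≤ t k) :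
    Summable fun k => ζ ^ k / (1 + (t k : ℂ)) :=
  (summable_geometric_of_lt_one (norm_nonneg ζ) hζ).of_norm_bounded fun k =>
    (norm_div_one_add_ofReal_le _ (ht k)).trans (norm_pow ζ k).le

lemma tendsto_tsum_pow_div_one_add_mul_nhdsLT_one {ζ : ℂ} (hζ : ‖ζ‖ < 1) {t : ℕ → ℝ}
    (ht : ∀ k, 0 ≤ t k) :
    Tendsto (fun x : ℝ => ∑' k, ζ ^ k / (1 + ((x * t k : ℝ) : ℂ))) (𝓝[<] 1)
      (𝓝 (∑' k, ζ ^ k / (1 + (t k : ℂ)))) := by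
  refine tendsto_tsum_of_dominated_convergence (bound := fun k => ‖ζ‖ ^ k)
    (summable_geometric_of_lt_one (norm_nonneg ζ) hζ) (fun k => ?_) ?_
  · have hpos : (0 : ℝ) < 1 + 1 * t k := by linarith [ht k]
    have hcont : ContinuousAt (fun x : ℝ => ζ ^ k / (1 + ((x * t k : ℝ) : ℂ))) 1 :=
      continuousAt_const.div (by fun_prop) (by exact_mod_cast hpos.ne')
    simpa using hcont.tendsto.mono_left nhdsWithin_le_nhds
  · filter_upwards [Ioo_mem_nhdsLT one_pos] with x hx k
    exact (norm_div_one_add_ofReal_le _ (mul_nonneg hx.1.le (ht k))).trans (norm_pow ζ k).le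

lemma hasSum_alternating_div_one_sub_pow_mul {x q ζ : ℂ} (hx : ‖x‖ < 1) (hq : ‖q‖ ≤ 1)
    (hζ : ‖ζ‖ < 1) :
    HasSum (fun l : ℕ => (-1) ^ (l + 1) * x ^ l / (1 - q ^ l * ζ))
      (-∑' k : ℕ, ζ ^ k / (1 + x * q ^ k)) := by
  set F : ℕ × ℕ → ℂ := fun p => -((-x) ^ p.1 * (q ^ p.1 * ζ) ^ p.2)
  have hqpow : ∀ n : ℕ, ‖q ^ n‖ ≤ 1 := fun n => by
    rw [norm_pow]; exact pow_le_one₀ (norm_nonneg q) hq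
  have hF : Summable F := by
    refine Summable.of_norm_bounded (g := fun p : ℕ × ℕ => ‖x‖ ^ p.1 * ‖ζ‖ ^ p.2)
      ((summable_geometric_of_lt_one (norm_nonneg x) hx).mul_of_nonneg
        (summable_geometric_of_lt_one (norm_nonneg ζ) hζ) (fun _ => by positivity)
        (fun _ => by positivity)) fun _ => ?_
    simp only [F, norm_neg, norm_mul, norm_pow]
    gcongr
    exact mul_le_of_le_one_left (norm_nonneg ζ) (pow_le_one₀ (norm_nonneg q) hq)
  have hrow : ∀ l : ℕ, HasSum (fun k => F (l, k)) ((-1) ^ (l + 1) * x ^ l / (1 - q ^ l * ζ)) := by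
    intro l
    have hlt : ‖q ^ l * ζ‖ < 1 := by
      rw [norm_mul]; exact (mul_le_of_le_one_left (norm_nonneg ζ) (hqpow l)).trans_lt hζ
    have h := ((hasSum_geometric_of_norm_lt_one hlt).mul_left ((-x) ^ l)).neg
    rwa [show -((-x) ^ l * (1 - q ^ l * ζ)⁻¹) = (-1) ^ (l + 1) * x ^ l / (1 - q ^ l * ζ) by
      rw [neg_pow]; ring] at h
  have hcol : ∀ k : ℕ, HasSum (fun l => F (l, k)) (-(ζ ^ k / (1 + x * q ^ k))) := by
    intro k
    have hlt : ‖-(x * q ^ k)‖ < 1 := by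
      rw [norm_neg, norm_mul]; exact (mul_le_of_le_one_right (norm_nonneg x) (hqpow k)).trans_lt hx
    have h := ((hasSum_geometric_of_norm_lt_one hlt).mul_left (ζ ^ k)).neg
    rw [sub_neg_eq_add, ← div_eq_mul_inv] at h
    have hterm : ∀ l, -(ζ ^ k * (-(x * q ^ k)) ^ l) = F (l, k) := fun l => by
      simp only [F, neg_pow (x * q ^ k), neg_pow x, mul_pow, ← pow_mul, mul_comm k l]
      ring
    simpa only [hterm] using h
  have hrows := hF.hasSum.prod_fiberwise hrow
  have hcols := hF.prod_symm.hasSum.prod_fiberwise hcol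
  have hswap : ∑' p : ℕ × ℕ, F p.swap = ∑' p, F p := (Equiv.prodComm ℕ ℕ).tsum_eq F
  rwa [← hswap, ← hcols.tsum_eq, tsum_neg] at hrows

/-- Σ_{l≥0} (−1)^{l+1}/(1 − ρ^{2l}ζ) = −Σ_{k≥0} ζᵏ/(1+ρ^{2k}), the left side summed
in the regularized (Abel) sense corresponding to the pairing of consecutive terms,
the right side absolutely convergent. -/
theorem alternating_resummation (ρ : ℝ) (hρ₀ : 0 < ρ) (hρ₁ : ρ < 1)
    (ζ : ℂ) (hζ : ‖ζ‖ < 1) :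
    Summable (fun k : ℕ => ζ ^ k / (1 + (ρ : ℂ) ^ (2*k))) ∧
    ∃ g : ℝ → ℂ,
      (∀ x : ℝ, 0 ≤ x → x < 1 →
        HasSum (fun l : ℕ => (-1) ^ (l+1) * (x : ℂ) ^ l / (1 - (ρ : ℂ) ^ (2*l) * ζ)) (g x)) ∧
      Filter.Tendsto g (nhdsWithin 1 (Set.Iio 1))
        (nhds (-∑' k : ℕ, ζ ^ k / (1 + (ρ : ℂ) ^ (2*k)))) := by
  have hρpow : ∀ k : ℕ, 0 ≤ ρ ^ (2 * k) := fun k => pow_nonneg hρ₀.le _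
  refine ⟨by exact_mod_cast summable_pow_div_one_add_ofReal hζ hρpow,
    fun x => -∑' k : ℕ, ζ ^ k / (1 + ((x * ρ ^ (2 * k) : ℝ) : ℂ)), fun x hx₀ hx₁ => ?_, ?_⟩
  · have hq : ‖(ρ : ℂ) ^ 2‖ ≤ 1 := by
      rw [norm_pow, norm_real, Real.norm_of_nonneg hρ₀.le]
      exact pow_le_one₀ hρ₀.le hρ₁.le
    have hx : ‖(x : ℂ)‖ < 1 := by rwa [norm_real, Real.norm_of_nonneg hx₀]
    simpa only [← pow_mul, ofReal_mul, ofReal_pow] using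
      hasSum_alternating_div_one_sub_pow_mul hx hq hζ
  · exact_mod_cast (tendsto_tsum_pow_div_one_add_mul_nhdsLT_one hζ hρpow).neg
end

section
/- Let r₁, r₂ > 0 and ε > 0 small. Define c₁ = (r₂² − r₁² − (r₁+r₂+ε)²)/(2(r₁+r₂+ε)) − β/2 and c₂ = c₁ + r₁ + r₂ + ε, with β = √ε √((2r₁+ε)(2r₂+ε)(2r₁+2r₂+ε))/(r₁+r₂+ε). Then with R_j² = 1 + β/c_j one has ρ := R₁/R₂ = 1 − r*√ε + O(ε) as ε → 0⁺, where r* = √(2(r₁+r₂)/(r₁r₂)). -/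
/-!
Write `t = √ε`. Then `β = κ t + O(t²)` with `κ = √(8 r₁ r₂ (r₁ + r₂)) / (r₁ + r₂)`, while
`c₁ = -r₁ + O(t)` and `c₂ = r₂ + O(t)`, so `β / c₁ = -κ t / r₁ + O(t²)` and
`β / c₂ = κ t / r₂ + O(t²)`. From `√(1 + x) = 1 + x / 2 + O(x²)` we get
`R₁ = 1 - κ t / (2 r₁) + O(ε)` and `R₂ = 1 + κ t / (2 r₂) + O(ε)`, hence
`R₁ / R₂ = 1 - κ (r₁ + r₂) / (2 r₁ r₂) · t + O(ε)`, and `κ (r₁ + r₂) / (2 r₁ r₂) = r*`.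
-/

open Real Filter Topology Asymptotics

theorem abs_sqrt_one_add_sub_le {x : ℝ} (hx : -1 ≤ x) : |√(1 + x) - (1 + x / 2)| ≤ x ^ 2 / 2 := by
  have hy : √(1 + x) ^ 2 = 1 + x := sq_sqrt (by linarith)
  have hy0 := sqrt_nonneg (1 + x)
  -- `√(1+x) - 1 - x/2 = -(√(1+x) - 1)²/2`
  have hsq : (√(1 + x) - 1) ^ 2 ≤ x ^ 2 := by
    have : x = (√(1 + x) - 1) * (√(1 + x) + 1) := by nlinarith
    nlinarith
  rw [abs_le]; constructor <;> nlinarith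

theorem isBigO_sqrt_one_add_sub : (fun x : ℝ => √(1 + x) - (1 + x / 2)) =O[𝓝 0] fun x => x ^ 2 := by
  refine IsBigO.of_bound (1 / 2) ?_
  filter_upwards [Ioi_mem_nhds (show (-1 : ℝ) < 0 by norm_num)] with x hx
  simpa [abs_of_nonneg (sq_nonneg x), div_eq_inv_mul] using abs_sqrt_one_add_sub_le (le_of_lt hx)

section
variable {α : Type*} {l : Filter α} {t : α → ℝ}

theorem isBigO_sq_self_of_tendsto_zero (ht : Tendsto t l (𝓝 0)) : (fun a => t a ^ 2) =O[l] t := by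
  simpa [sq] using (isBigO_refl t l).mul (ht.isBigO_one ℝ)

theorem isBigO_sqrt_one_add_div_sub {β c : α → ℝ} {κ c₀ : ℝ} (ht : Tendsto t l (𝓝 0))
    (hc₀ : c₀ ≠ 0) (hβ : (fun a => β a - κ * t a) =O[l] fun a => t a ^ 2)
    (hc : (fun a => c a - c₀) =O[l] t) :
    (fun a => √(1 + β a / c a) - (1 + κ / (2 * c₀) * t a)) =O[l] fun a => t a ^ 2 := by
  have ht2 := isBigO_sq_self_of_tendsto_zero ht
  have hc_lim : Tendsto c l (𝓝 c₀) := by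
    simpa using (hc.trans_tendsto ht).add_const c₀
  have hc_inv : (fun a => (c a)⁻¹) =O[l] fun _ => (1 : ℝ) := (hc_lim.inv₀ hc₀).isBigO_one ℝ
  have hx : (fun a => β a / c a - κ / c₀ * t a) =O[l] fun a => t a ^ 2 := by
    have h₁ : (fun a => (β a - κ * t a) * (c a)⁻¹) =O[l] fun a => t a ^ 2 := by
      simpa using hβ.mul hc_inv
    have h₂ : (fun a => κ / c₀ * (t a * (c a - c₀)) * (c a)⁻¹) =O[l] fun a => t a ^ 2 := by
      simpa [sq] using (((isBigO_refl t l).mul hc).const_mul_left (κ / c₀)).mul hc_inv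
    refine (h₁.sub h₂).congr' ?_ (EventuallyEq.refl _ _)
    filter_upwards [hc_lim.eventually_ne hc₀] with a ha
    field_simp
    ring
  have hxt : (fun a => β a / c a) =O[l] t := by
    simpa using (hx.trans ht2).add ((isBigO_refl t l).const_mul_left (κ / c₀))
  have hsqrt := (isBigO_sqrt_one_add_sub.comp_tendsto (hxt.trans_tendsto ht)).trans (hxt.pow 2)
  refine (hsqrt.add (hx.const_mul_left (1 / 2))).congr_left fun a => ?_
  simp only [Function.comp_apply]
  field_simp
  ring

theorem isBigO_div_sub_one_add_mul {u v : α → ℝ} {a b : ℝ} (ht : Tendsto t l (𝓝 0))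
    (hu : (fun x => u x - (1 + a * t x)) =O[l] fun x => t x ^ 2)
    (hv : (fun x => v x - (1 + b * t x)) =O[l] fun x => t x ^ 2) :
    (fun x => u x / v x - (1 + (a - b) * t x)) =O[l] fun x => t x ^ 2 := by
  have hv_lim : Tendsto v l (𝓝 1) := by
    have := (hv.trans (isBigO_sq_self_of_tendsto_zero ht)).add ((isBigO_refl t l).const_mul_left b)
    simpa using ((this.trans_tendsto ht).add_const 1).congr fun x => by ring
  have hv_inv : (fun x => (v x)⁻¹) =O[l] fun _ => (1 : ℝ) := by
    simpa using (hv_lim.inv₀ one_ne_zero).isBigO_one ℝ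
  have hlin : (fun x => 1 + (a - b) * t x) =O[l] fun _ => (1 : ℝ) := by
    simpa using (ht.const_mul (a - b)).const_add 1 |>.isBigO_one ℝ
  -- `1 + a t - (1 + (a - b) t) (1 + b t) = -(a - b) b t²`
  have hnum : (fun x => u x - (1 + (a - b) * t x) * v x) =O[l] fun x => t x ^ 2 := by
    have := (hu.sub (by simpa using hlin.mul hv)).sub
      ((isBigO_refl (fun x => t x ^ 2) l).const_mul_left ((a - b) * b))
    refine this.congr_left fun x => ?_
    ring
  refine (hnum.mul hv_inv).congr' ?_ (by simp)
  filter_upwards [hv_lim.eventually_ne one_ne_zero] with x hx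
  field_simp

end

theorem tendsto_sqrt_nhdsGT_zero : Tendsto (fun ε : ℝ => √ε) (𝓝[>] 0) (𝓝 0) :=
  (continuous_sqrt.tendsto' 0 0 sqrt_zero).mono_left nhdsWithin_le_nhds

theorem sqrt_sq_eventuallyEq : (fun ε : ℝ => √ε ^ 2) =ᶠ[𝓝[>] 0] fun ε => ε := by
  filter_upwards [self_mem_nhdsWithin] with ε hε
  exact sq_sqrt (le_of_lt hε)

theorem DifferentiableAt.isBigO_sub_sqrt_sq {f : ℝ → ℝ} (hf : DifferentiableAt ℝ f 0) :
    (fun ε => f ε - f 0) =O[𝓝[>] 0] fun ε => √ε ^ 2 :=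
  (hf.isBigO_sub.mono nhdsWithin_le_nhds).trans (by simpa using sqrt_sq_eventuallyEq.symm.isBigO)

namespace TwoDisks

variable (r₁ r₂ : ℝ)

noncomputable def beta (ε : ℝ) : ℝ :=
  √ε * √((2*r₁+ε)*(2*r₂+ε)*(2*r₁+2*r₂+ε)) / (r₁+r₂+ε)

noncomputable def center₁ (ε : ℝ) : ℝ :=
  (r₂^2 - r₁^2 - (r₁+r₂+ε)^2) / (2*(r₁+r₂+ε)) - beta r₁ r₂ ε / 2

noncomputable def center₂ (ε : ℝ) : ℝ := center₁ r₁ r₂ ε + r₁ + r₂ + ε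

variable {r₁ r₂} (hr₁ : 0 < r₁) (hr₂ : 0 < r₂)
include hr₁ hr₂

theorem isBigO_beta_sub :
    (fun ε => beta r₁ r₂ ε - √(8*r₁*r₂*(r₁+r₂)) / (r₁+r₂) * √ε) =O[𝓝[>] 0]
      fun ε => √ε ^ 2 := by
  set q : ℝ → ℝ := fun ε => √((2*r₁+ε)*(2*r₂+ε)*(2*r₁+2*r₂+ε)) / (r₁+r₂+ε)
  have hq : DifferentiableAt ℝ q 0 := by
    refine DifferentiableAt.div (DifferentiableAt.sqrt (by fun_prop) ?_) (by fun_prop) ?_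
    all_goals positivity
  have hq0 : q 0 = √(8*r₁*r₂*(r₁+r₂)) / (r₁+r₂) := by
    simp only [q, add_zero]; ring_nf
  have := (tendsto_sqrt_nhdsGT_zero.isBigO_one ℝ).mul hq.isBigO_sub_sqrt_sq
  refine this.congr' (.of_forall fun ε => ?_) (.of_forall fun ε => one_mul _)
  rw [← hq0]
  simp only [beta, q]
  ring

theorem isBigO_center₁_add :
    (fun ε => center₁ r₁ r₂ ε - -r₁) =O[𝓝[>] 0] fun ε => √ε := by
  set d : ℝ → ℝ := fun ε => (r₂^2 - r₁^2 - (r₁+r₂+ε)^2) / (2*(r₁+r₂+ε))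
  have hd : DifferentiableAt ℝ d 0 := by
    refine DifferentiableAt.div (by fun_prop) (by fun_prop) ?_
    positivity
  have hd0 : d 0 = -r₁ := by
    simp only [d, add_zero]; field_simp; ring
  have ht2 := isBigO_sq_self_of_tendsto_zero tendsto_sqrt_nhdsGT_zero
  have hβ : beta r₁ r₂ =O[𝓝[>] 0] fun ε => √ε := by
    simpa using ((isBigO_beta_sub hr₁ hr₂).trans ht2).add
      ((isBigO_refl _ _).const_mul_left (√(8*r₁*r₂*(r₁+r₂)) / (r₁+r₂)))
  refine ((hd.isBigO_sub_sqrt_sq.trans ht2).sub (hβ.const_mul_left (1/2))).congr_left fun ε => ?_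
  rw [← hd0, center₁]
  ring

theorem isBigO_center₂_sub :
    (fun ε => center₂ r₁ r₂ ε - r₂) =O[𝓝[>] 0] fun ε => √ε := by
  have hε : (fun ε : ℝ => ε) =O[𝓝[>] 0] fun ε => √ε :=
    sqrt_sq_eventuallyEq.symm.isBigO.trans (isBigO_sq_self_of_tendsto_zero tendsto_sqrt_nhdsGT_zero)
  refine ((isBigO_center₁_add hr₁ hr₂).add hε).congr_left fun ε => ?_
  rw [center₂]
  ring

theorem sqrt_div_add_div_eq :
    √(8*r₁*r₂*(r₁+r₂)) / (r₁+r₂) / (2*r₁) + √(8*r₁*r₂*(r₁+r₂)) / (r₁+r₂) / (2*r₂) =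
      √(2*(r₁+r₂)/(r₁*r₂)) := by
  rw [eq_comm, sqrt_eq_iff_mul_self_eq_of_pos (by positivity)]
  field_simp
  rw [sq_sqrt (by positivity)]
  ring

theorem isBigO_rho_sub :
    (fun ε => √(1 + beta r₁ r₂ ε / center₁ r₁ r₂ ε) / √(1 + beta r₁ r₂ ε / center₂ r₁ r₂ ε) -
      (1 - √(2*(r₁+r₂)/(r₁*r₂)) * √ε)) =O[𝓝[>] 0] fun ε => ε := by
  have ht := tendsto_sqrt_nhdsGT_zero
  have hβ := isBigO_beta_sub hr₁ hr₂
  have h := isBigO_div_sub_one_add_mul ht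
    (isBigO_sqrt_one_add_div_sub ht (neg_ne_zero.2 hr₁.ne') hβ (isBigO_center₁_add hr₁ hr₂))
    (isBigO_sqrt_one_add_div_sub ht hr₂.ne' hβ (isBigO_center₂_sub hr₁ hr₂))
  rw [← sqrt_div_add_div_eq hr₁ hr₂]
  refine (h.trans sqrt_sq_eventuallyEq.isBigO).congr_left fun ε => ?_
  ring

end TwoDisks

/-- ρ = R₁/R₂ = 1 − r*√ε + O(ε) as ε → 0⁺. -/
theorem rho_asymptotics (r₁ r₂ : ℝ) (hr₁ : 0 < r₁) (hr₂ : 0 < r₂) :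
    ∃ C ε₀ : ℝ, 0 < C ∧ 0 < ε₀ ∧ ∀ ε : ℝ, 0 < ε → ε < ε₀ →
      let β := Real.sqrt ε * Real.sqrt ((2*r₁+ε)*(2*r₂+ε)*(2*r₁+2*r₂+ε)) / (r₁+r₂+ε)
      let c₁ := (r₂^2 - r₁^2 - (r₁+r₂+ε)^2) / (2*(r₁+r₂+ε)) - β/2
      let c₂ := c₁ + r₁ + r₂ + ε
      let R₁ := Real.sqrt (1 + β/c₁)
      let R₂ := Real.sqrt (1 + β/c₂)
      |R₁/R₂ - (1 - Real.sqrt (2*(r₁+r₂)/(r₁*r₂)) * Real.sqrt ε)| ≤ C * ε := by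
  obtain ⟨C, hC, hbound⟩ := (TwoDisks.isBigO_rho_sub hr₁ hr₂).exists_pos
  obtain ⟨ε₀, hε₀, hε₀_bound⟩ := (nhdsGT_basis 0).eventually_iff.mp hbound.bound
  refine ⟨C, ε₀, hC, hε₀, fun ε hε hεε₀ => ?_⟩
  have := hε₀_bound ⟨hε, hεε₀⟩
  rwa [norm_eq_abs, norm_eq_abs, abs_of_pos hε] at this
end
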